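/- Let p > 2, α, β > 1 with α + β = p, and a₁, a₂, b₁, b₂, d > 0. Define e(s,t) := a₁s² + a₂t² − b₁sᵖ − b₂tᵖ + d·sᵅtᵝ on V := (0,∞) × (0,∞), and assume that (1,1) is a critical point of e. If every critical point of e in V is a strict local maximum of e, then (1,1) is the only critical point of e in V and it is a global maximum of e on V, i.e., e(s,t) ≤ e(1,1) for all (s,t) ∈ V. -/

import Mathlib

open Set

/-- The function `e(s,t) = a₁s² + a₂t² − b₁sᵖ − b₂tᵖ + d sᵅ tᵝ` of the appendix. -/
noncomputable def eFun (a₁ a₂ b₁ b₂ d p α β : ℝ) (s t : ℝ) : ℝ :=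
  a₁ * s ^ 2 + a₂ * t ^ 2 - b₁ * s ^ p - b₂ * t ^ p + d * s ^ α * t ^ β

/-- The partial derivative `∂e/∂s`. -/
noncomputable def eFunDS (a₁ a₂ b₁ b₂ d p α β : ℝ) (s t : ℝ) : ℝ :=
  deriv (fun s' => eFun a₁ a₂ b₁ b₂ d p α β s' t) s

/-- The partial derivative `∂e/∂t`. -/
noncomputable def eFunDT (a₁ a₂ b₁ b₂ d p α β : ℝ) (s t : ℝ) : ℝ :=
  deriv (fun t' => eFun a₁ a₂ b₁ b₂ d p α β s t') t

open Filter Topology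

/-!
Criticality of `(1,1)` means `p b₁ = 2a₁ + dα` and `p b₂ = 2a₂ + dβ`. With these identities, Young's
inequality `p sᵅtᵝ ≤ α sᵖ + β tᵖ` and Bernoulli's inequality `p u² ≤ 2uᵖ + (p - 2)` give
`p e(s,t) ≤ (p - 2)(a₁ + a₂) = p e(1,1)` on all of `V`.

For uniqueness, the zero set of `∂e/∂s` in `V` is the graph of a curve `t = f(s)` with `f' > 0`, and
`ψ(s) = e(s, f(s))` has `ψ' = (∂e/∂t)(s, f(s)) · f'(s)`. So the critical points of `e` are the points
`(s, f(s))` with `ψ'(s) = 0`, and each of them is a strict local maximum of `ψ`. If there were two, `ψ`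
would attain its minimum between them at an interior point, another critical point that is not a strict
local maximum.
-/

theorem eq_of_deriv_eq_zero_of_forall_strictLocalMax {f : ℝ → ℝ} {u v : ℝ} (huv : u ≤ v)
    (hf : ContinuousOn f (Icc u v)) (hu : deriv f u = 0) (hv : deriv f v = 0)
    (hmax : ∀ x ∈ Icc u v, deriv f x = 0 → ∀ᶠ y in 𝓝[≠] x, f y < f x) : u = v := by
  by_contra huv'
  replace huv : u < v := huv.lt_of_ne huv'
  obtain ⟨m, hm, hmin⟩ := isCompact_Icc.exists_isMinOn (nonempty_Icc.2 huv.le) hf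
  have hcrit : deriv f m = 0 := by
    rcases hm.1.eq_or_lt with rfl | hum
    · exact hu
    rcases hm.2.eq_or_lt with rfl | hmv
    · exact hv
    exact (hmin.isLocalMin (Icc_mem_nhds hum hmv)).deriv_eq_zero
  have hlt := hmax m hm hcrit
  obtain ⟨y, hy, hfy⟩ : ∃ y ∈ Icc u v, f y < f m := by
    rcases hm.2.lt_or_eq with hmv | rfl
    · have hle : 𝓝[>] m ≤ 𝓝[≠] m := nhdsWithin_mono _ fun y hy => ne_of_gt hy
      obtain ⟨y, hy, hfy⟩ := (Eventually.and (Ioo_mem_nhdsGT hmv) (hle hlt)).exists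
      exact ⟨y, ⟨hm.1.trans hy.1.le, hy.2.le⟩, hfy⟩
    · have hle : 𝓝[<] m ≤ 𝓝[≠] m := nhdsWithin_mono _ fun y hy => ne_of_lt hy
      obtain ⟨y, hy, hfy⟩ := (Eventually.and (Ioo_mem_nhdsLT huv) (hle hlt)).exists
      exact ⟨y, ⟨hy.1.le, hy.2.le⟩, hfy⟩
  exact hfy.not_ge (hmin hy)

def IsStrictLocalMaxOnQuadrant (E : ℝ → ℝ → ℝ) (s t : ℝ) : Prop :=
  ∃ ε > 0, ∀ s' t' : ℝ, 0 < s' → 0 < t' → |s' - s| < ε → |t' - t| < ε →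
    (s', t') ≠ (s, t) → E s' t' < E s t

theorem IsStrictLocalMaxOnQuadrant.eventually_comp_lt {E : ℝ → ℝ → ℝ} {g : ℝ → ℝ} {z : ℝ}
    (hmax : IsStrictLocalMaxOnQuadrant E z (g z)) (hz : 0 < z) (hgz : 0 < g z)
    (hg : ContinuousAt g z) : ∀ᶠ y in 𝓝[≠] z, E y (g y) < E z (g z) := by
  obtain ⟨ε, hε, hlt⟩ := hmax
  have hnear : ∀ᶠ y in 𝓝 z, 0 < y ∧ 0 < g y ∧ dist y z < ε ∧ dist (g y) (g z) < ε :=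
    (lt_mem_nhds hz).and <| (hg.eventually (lt_mem_nhds hgz)).and <|
      Eventually.and (Metric.ball_mem_nhds z hε) (Metric.tendsto_nhds.1 hg ε hε)
  filter_upwards [nhdsWithin_le_nhds hnear, self_mem_nhdsWithin] with y ⟨hy, hgy, hyz, hgyz⟩ hne
  exact hlt y (g y) hy hgy hyz hgyz fun h => hne (Prod.mk.inj h).1

theorem add_mul_rpow_mul_rpow_le {s t α β : ℝ} (hs : 0 ≤ s) (ht : 0 ≤ t) (hα : 0 ≤ α)
    (hβ : 0 ≤ β) (hαβ : 0 < α + β) :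
    (α + β) * (s ^ α * t ^ β) ≤ α * s ^ (α + β) + β * t ^ (α + β) := by
  have h := Real.geom_mean_le_arith_mean2_weighted (div_nonneg hα hαβ.le)
    (div_nonneg hβ hαβ.le) (Real.rpow_nonneg hs (α + β)) (Real.rpow_nonneg ht (α + β))
    (by field_simp)
  rw [← Real.rpow_mul hs, ← Real.rpow_mul ht, mul_div_cancel₀ _ hαβ.ne',
    mul_div_cancel₀ _ hαβ.ne'] at h
  calc (α + β) * (s ^ α * t ^ β)
      ≤ (α + β) * (α / (α + β) * s ^ (α + β) + β / (α + β) * t ^ (α + β)) := by gcongr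
    _ = α * s ^ (α + β) + β * t ^ (α + β) := by field_simp

theorem mul_sq_le_two_mul_rpow_add {u p : ℝ} (hu : 0 ≤ u) (hp : 2 ≤ p) :
    p * u ^ 2 ≤ 2 * u ^ p + (p - 2) := by
  have h := one_add_mul_self_le_rpow_one_add (s := u ^ 2 - 1) (by nlinarith) (p := p / 2)
    (by linarith)
  have hpow : (u ^ 2) ^ (p / 2) = u ^ p := by
    rw [← Real.rpow_natCast, ← Real.rpow_mul hu, Nat.cast_ofNat, mul_div_cancel₀ _ two_ne_zero]
  rw [add_sub_cancel, hpow] at h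
  linarith

-- `critPow s` is the value of `t ^ β` at which `∂e/∂s (s, t)` vanishes; for `s > 0` it is positive
-- exactly on `critDomain`.
noncomputable def critPow (a₁ b₁ d p α s : ℝ) : ℝ :=
  (p * b₁ * s ^ (p - α) - 2 * a₁ * s ^ (2 - α)) / (d * α)

noncomputable def critCurve (a₁ b₁ d p α β s : ℝ) : ℝ :=
  critPow a₁ b₁ d p α s ^ β⁻¹

def critDomain (a₁ b₁ p : ℝ) : Set ℝ :=
  {s | 0 < s ∧ 2 * a₁ < p * b₁ * s ^ (p - 2)}

section

variable {a₁ a₂ b₁ b₂ d p α β : ℝ}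

theorem hasDerivAt_eFun_fst {s : ℝ} (hs : 0 < s) (t : ℝ) :
    HasDerivAt (fun s' => eFun a₁ a₂ b₁ b₂ d p α β s' t)
      (2 * a₁ * s - p * b₁ * s ^ (p - 1) + d * α * s ^ (α - 1) * t ^ β) s := by
  have hp := Real.hasDerivAt_rpow_const (p := p) (Or.inl hs.ne')
  have hα := Real.hasDerivAt_rpow_const (p := α) (Or.inl hs.ne')
  refine (((((hasDerivAt_pow 2 s).const_mul a₁).add_const (a₂ * t ^ 2)).sub
    (hp.const_mul b₁)).sub_const (b₂ * t ^ p) |>.add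
      ((hα.const_mul d).mul_const (t ^ β))).congr_deriv ?_
  push_cast
  ring

theorem hasDerivAt_eFun_snd (s : ℝ) {t : ℝ} (ht : 0 < t) :
    HasDerivAt (fun t' => eFun a₁ a₂ b₁ b₂ d p α β s t')
      (2 * a₂ * t - p * b₂ * t ^ (p - 1) + d * β * s ^ α * t ^ (β - 1)) t := by
  have hp := Real.hasDerivAt_rpow_const (p := p) (Or.inl ht.ne')
  have hβ := Real.hasDerivAt_rpow_const (p := β) (Or.inl ht.ne')
  refine (((((hasDerivAt_pow 2 t).const_mul a₂).const_add (a₁ * s ^ 2)).sub_const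
    (b₁ * s ^ p)).sub (hp.const_mul b₂) |>.add
      (hβ.const_mul (d * s ^ α))).congr_deriv ?_
  push_cast
  ring

theorem eFunDS_eq {s : ℝ} (hs : 0 < s) (t : ℝ) :
    eFunDS a₁ a₂ b₁ b₂ d p α β s t
      = 2 * a₁ * s - p * b₁ * s ^ (p - 1) + d * α * s ^ (α - 1) * t ^ β :=
  (hasDerivAt_eFun_fst hs t).deriv

theorem eFunDT_eq (s : ℝ) {t : ℝ} (ht : 0 < t) :
    eFunDT a₁ a₂ b₁ b₂ d p α β s t
      = 2 * a₂ * t - p * b₂ * t ^ (p - 1) + d * β * s ^ α * t ^ (β - 1) :=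
  (hasDerivAt_eFun_snd s ht).deriv

theorem hasDerivAt_eFun_comp {g : ℝ → ℝ} {g' s : ℝ} (hs : 0 < s) (hgs : 0 < g s)
    (hg : HasDerivAt g g' s) :
    HasDerivAt (fun x => eFun a₁ a₂ b₁ b₂ d p α β x (g x))
      (eFunDS a₁ a₂ b₁ b₂ d p α β s (g s) + eFunDT a₁ a₂ b₁ b₂ d p α β s (g s) * g') s := by
  rw [eFunDS_eq hs, eFunDT_eq s hgs]
  have hp := Real.hasDerivAt_rpow_const (p := p) (Or.inl hs.ne')
  have hα := Real.hasDerivAt_rpow_const (p := α) (Or.inl hs.ne')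
  refine ((((((hasDerivAt_pow 2 s).const_mul a₁).add ((hg.pow 2).const_mul a₂)).sub
    (hp.const_mul b₁)).sub ((hg.rpow_const (p := p) (Or.inl hgs.ne')).const_mul b₂)).add
    ((hα.const_mul d).mul (hg.rpow_const (p := β) (Or.inl hgs.ne')))).congr_deriv ?_
  push_cast
  ring

theorem mem_critDomain_of_le (hb₁ : 0 ≤ b₁) (hp : 2 ≤ p) {s s' : ℝ}
    (hs : s ∈ critDomain a₁ b₁ p) (hss' : s ≤ s') : s' ∈ critDomain a₁ b₁ p := by
  refine ⟨hs.1.trans_le hss', hs.2.trans_le ?_⟩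
  gcongr
  exact hs.1.le

theorem critPow_eq {s : ℝ} (hs : 0 < s) :
    critPow a₁ b₁ d p α s = s ^ (2 - α) * (p * b₁ * s ^ (p - 2) - 2 * a₁) / (d * α) := by
  rw [critPow, show p - α = (p - 2) + (2 - α) by ring, Real.rpow_add hs]
  ring

theorem critPow_pos_iff (hd : 0 < d) (hα : 0 < α) {s : ℝ} (hs : 0 < s) :
    0 < critPow a₁ b₁ d p α s ↔ s ∈ critDomain a₁ b₁ p := by
  rw [critPow_eq hs, mul_div_assoc, mul_pos_iff_of_pos_left (Real.rpow_pos_of_pos hs _),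
    div_pos_iff_of_pos_right (by positivity), sub_pos]
  exact ⟨fun h => ⟨hs, h⟩, fun h => h.2⟩

theorem critCurve_pos (hd : 0 < d) (hα : 0 < α) {s : ℝ} (hs : s ∈ critDomain a₁ b₁ p) :
    0 < critCurve a₁ b₁ d p α β s :=
  Real.rpow_pos_of_pos ((critPow_pos_iff hd hα hs.1).2 hs) _

theorem eFunDS_eq_mul_sub (hd : 0 < d) (hα : 0 < α) {s : ℝ} (hs : 0 < s) (t : ℝ) :
    eFunDS a₁ a₂ b₁ b₂ d p α β s t
      = d * α * s ^ (α - 1) * (t ^ β - critPow a₁ b₁ d p α s) := by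
  have hp : s ^ (α - 1) * s ^ (p - α) = s ^ (p - 1) := by
    rw [← Real.rpow_add hs]; ring_nf
  have h2 : s ^ (α - 1) * s ^ (2 - α) = s := by
    rw [← Real.rpow_add hs]; norm_num
  have hdα : d * α * s ^ (α - 1) * ((p * b₁ * s ^ (p - α) - 2 * a₁ * s ^ (2 - α)) / (d * α))
      = s ^ (α - 1) * (p * b₁ * s ^ (p - α) - 2 * a₁ * s ^ (2 - α)) := by
    field_simp
  rw [eFunDS_eq hs, critPow, mul_sub, hdα]
  linear_combination (p * b₁) * hp - (2 * a₁) * h2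

theorem eFunDS_critCurve (hd : 0 < d) (hα : 0 < α) (hβ : β ≠ 0) {s : ℝ}
    (hs : s ∈ critDomain a₁ b₁ p) :
    eFunDS a₁ a₂ b₁ b₂ d p α β s (critCurve a₁ b₁ d p α β s) = 0 := by
  rw [eFunDS_eq_mul_sub hd hα hs.1, critCurve,
    Real.rpow_inv_rpow ((critPow_pos_iff hd hα hs.1).2 hs).le hβ, sub_self, mul_zero]

theorem eq_critCurve_of_eFunDS_eq_zero (hd : 0 < d) (hα : 0 < α) (hβ : β ≠ 0) {s t : ℝ}
    (hs : 0 < s) (ht : 0 < t) (hS : eFunDS a₁ a₂ b₁ b₂ d p α β s t = 0) :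
    s ∈ critDomain a₁ b₁ p ∧ t = critCurve a₁ b₁ d p α β s := by
  rw [eFunDS_eq_mul_sub hd hα hs, mul_eq_zero, sub_eq_zero] at hS
  have htβ : t ^ β = critPow a₁ b₁ d p α s :=
    hS.resolve_left (by have := Real.rpow_pos_of_pos hs (α - 1); positivity)
  refine ⟨(critPow_pos_iff hd hα hs).1 (htβ ▸ Real.rpow_pos_of_pos ht β), ?_⟩
  rw [critCurve, ← htβ, Real.rpow_rpow_inv ht.le hβ]

theorem exists_hasDerivAt_critCurve_pos (ha₁ : 0 ≤ a₁) (hd : 0 < d) (hα : 0 < α)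
    (hαp : α < p) (hp : 2 ≤ p) (hβ : 0 < β) {s : ℝ} (hs : s ∈ critDomain a₁ b₁ p) :
    ∃ f' > 0, HasDerivAt (critCurve a₁ b₁ d p α β) f' s := by
  obtain ⟨hs0, hsD⟩ := hs
  have hF : HasDerivAt (critPow a₁ b₁ d p α)
      (s ^ (1 - α) * ((p - α) * (p * b₁ * s ^ (p - 2)) - (2 - α) * (2 * a₁)) / (d * α)) s := by
    refine (((Real.hasDerivAt_rpow_const (Or.inl hs0.ne')).const_mul (p * b₁)).sub
      ((Real.hasDerivAt_rpow_const (Or.inl hs0.ne')).const_mul (2 * a₁))).div_const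
      (d * α) |>.congr_deriv ?_
    rw [show p - α - 1 = (p - 2) + (1 - α) by ring, show 2 - α - 1 = 1 - α by ring,
      Real.rpow_add hs0]
    ring
  have hF' : 0 < s ^ (1 - α) * ((p - α) * (p * b₁ * s ^ (p - 2)) - (2 - α) * (2 * a₁))
      / (d * α) := by
    have : (2 - α) * (2 * a₁) < (p - α) * (p * b₁ * s ^ (p - 2)) :=
      calc (2 - α) * (2 * a₁) ≤ (p - α) * (2 * a₁) := by gcongr
        _ < (p - α) * (p * b₁ * s ^ (p - 2)) := by gcongr
    have := Real.rpow_pos_of_pos hs0 (1 - α)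
    have : 0 < (p - α) * (p * b₁ * s ^ (p - 2)) - (2 - α) * (2 * a₁) := by linarith
    positivity
  have hpos : 0 < critPow a₁ b₁ d p α s := (critPow_pos_iff hd hα hs0).2 ⟨hs0, hsD⟩
  refine ⟨_, ?_, hF.rpow_const (p := β⁻¹) (Or.inl hpos.ne')⟩
  have := Real.rpow_pos_of_pos hpos (β⁻¹ - 1)
  positivity

theorem exists_hasDerivAt_eFun_critCurve (ha₁ : 0 ≤ a₁) (hd : 0 < d) (hα : 0 < α)
    (hαp : α < p) (hp : 2 ≤ p) (hβ : 0 < β) {s : ℝ} (hs : s ∈ critDomain a₁ b₁ p) :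
    ∃ f' > 0, HasDerivAt (fun x => eFun a₁ a₂ b₁ b₂ d p α β x (critCurve a₁ b₁ d p α β x))
      (eFunDT a₁ a₂ b₁ b₂ d p α β s (critCurve a₁ b₁ d p α β s) * f') s := by
  obtain ⟨f', hf'pos, hf'⟩ := exists_hasDerivAt_critCurve_pos ha₁ hd hα hαp hp hβ hs
  refine ⟨f', hf'pos, ?_⟩
  convert hasDerivAt_eFun_comp hs.1 (critCurve_pos hd hα hs) hf' using 1
  rw [eFunDS_critCurve hd hα hβ.ne' hs, zero_add]

theorem eq_of_eFunDT_critCurve_eq_zero (ha₁ : 0 ≤ a₁) (hb₁ : 0 ≤ b₁) (hd : 0 < d)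
    (hα : 0 < α) (hαp : α < p) (hp : 2 ≤ p) (hβ : 0 < β)
    (hmax : ∀ s t : ℝ, 0 < s → 0 < t →
      eFunDS a₁ a₂ b₁ b₂ d p α β s t = 0 → eFunDT a₁ a₂ b₁ b₂ d p α β s t = 0 →
      IsStrictLocalMaxOnQuadrant (eFun a₁ a₂ b₁ b₂ d p α β) s t)
    {u v : ℝ} (hu : u ∈ critDomain a₁ b₁ p) (hv : v ∈ critDomain a₁ b₁ p)
    (hTu : eFunDT a₁ a₂ b₁ b₂ d p α β u (critCurve a₁ b₁ d p α β u) = 0)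
    (hTv : eFunDT a₁ a₂ b₁ b₂ d p α β v (critCurve a₁ b₁ d p α β v) = 0) : u = v := by
  wlog huv : u ≤ v generalizing u v
  · exact (this hv hu hTv hTu (le_of_not_ge huv)).symm
  have hIcc : Icc u v ⊆ critDomain a₁ b₁ p := fun x hx => mem_critDomain_of_le hb₁ hp hu hx.1
  have hψ := fun x (hx : x ∈ critDomain a₁ b₁ p) =>
    exists_hasDerivAt_eFun_critCurve (a₂ := a₂) (b₂ := b₂) ha₁ hd hα hαp hp hβ hx
  refine eq_of_deriv_eq_zero_of_forall_strictLocalMax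
    (f := fun x => eFun a₁ a₂ b₁ b₂ d p α β x (critCurve a₁ b₁ d p α β x)) huv
    (fun x hx => ?_) ?_ ?_ fun x hx hx0 => ?_
  · obtain ⟨f', -, h⟩ := hψ x (hIcc hx)
    exact h.continuousAt.continuousWithinAt
  · obtain ⟨f', -, h⟩ := hψ u hu
    rw [h.deriv, hTu, zero_mul]
  · obtain ⟨f', -, h⟩ := hψ v hv
    rw [h.deriv, hTv, zero_mul]
  · have hxD := hIcc hx
    obtain ⟨f', hf', h⟩ := hψ x hxD
    rw [h.deriv, mul_eq_zero, or_iff_left hf'.ne'] at hx0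
    obtain ⟨g', -, hcurve⟩ := exists_hasDerivAt_critCurve_pos (β := β) ha₁ hd hα hαp hp hβ hxD
    exact (hmax x _ hxD.1 (critCurve_pos hd hα hxD) (eFunDS_critCurve hd hα hβ.ne' hxD)
      hx0).eventually_comp_lt hxD.1 (critCurve_pos hd hα hxD) hcurve.continuousAt

theorem eFun_le_eFun_one_one (ha₁ : 0 ≤ a₁) (ha₂ : 0 ≤ a₂) (hd : 0 ≤ d) (hα : 0 ≤ α)
    (hβ : 0 ≤ β) (hαβ : α + β = p) (hp : 2 ≤ p) (hS : p * b₁ = 2 * a₁ + d * α)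
    (hT : p * b₂ = 2 * a₂ + d * β) {s t : ℝ} (hs : 0 ≤ s) (ht : 0 ≤ t) :
    eFun a₁ a₂ b₁ b₂ d p α β s t ≤ eFun a₁ a₂ b₁ b₂ d p α β 1 1 := by
  have hyoung := add_mul_rpow_mul_rpow_le hs ht hα hβ (by linarith)
  rw [hαβ] at hyoung
  have hs2 := mul_sq_le_two_mul_rpow_add hs hp
  have ht2 := mul_sq_le_two_mul_rpow_add ht hp
  refine le_of_mul_le_mul_left ?_ (by linarith : 0 < p)
  simp only [eFun, Real.one_rpow, one_pow, mul_one]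
  linear_combination d * hyoung + a₁ * hs2 + a₂ * ht2 - s ^ p * hS - t ^ p * hT + hS + hT
    + d * hαβ

end

theorem statement4_general (a₁ a₂ b₁ b₂ d p α β : ℝ)
    (ha₁ : 0 < a₁) (ha₂ : 0 < a₂) (hb₁ : 0 < b₁) (hd : 0 < d)
    (hp : 2 < p) (hα : 1 < α) (hβ : 1 < β) (hαβ : α + β = p)
    (hcritS : eFunDS a₁ a₂ b₁ b₂ d p α β 1 1 = 0)
    (hcritT : eFunDT a₁ a₂ b₁ b₂ d p α β 1 1 = 0)
    (hmax : ∀ s t : ℝ, 0 < s → 0 < t →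
      eFunDS a₁ a₂ b₁ b₂ d p α β s t = 0 → eFunDT a₁ a₂ b₁ b₂ d p α β s t = 0 →
      ∃ ε > 0, ∀ s' t' : ℝ, 0 < s' → 0 < t' → |s' - s| < ε → |t' - t| < ε →
        (s', t') ≠ (s, t) →
        eFun a₁ a₂ b₁ b₂ d p α β s' t' < eFun a₁ a₂ b₁ b₂ d p α β s t) :
    (∀ s t : ℝ, 0 < s → 0 < t →
      eFunDS a₁ a₂ b₁ b₂ d p α β s t = 0 → eFunDT a₁ a₂ b₁ b₂ d p α β s t = 0 →
      s = 1 ∧ t = 1) ∧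
    (∀ s t : ℝ, 0 < s → 0 < t →
      eFun a₁ a₂ b₁ b₂ d p α β s t ≤ eFun a₁ a₂ b₁ b₂ d p α β 1 1) := by
  have hα₀ : 0 < α := by linarith
  have hβ₀ : 0 < β := by linarith
  have hS₁ : p * b₁ = 2 * a₁ + d * α := by
    rw [eFunDS_eq one_pos] at hcritS
    simp only [Real.one_rpow, mul_one] at hcritS
    linarith
  have hT₁ : p * b₂ = 2 * a₂ + d * β := by
    rw [eFunDT_eq 1 one_pos] at hcritT
    simp only [Real.one_rpow, mul_one] at hcritT
    linarith
  obtain ⟨h1D, h1curve⟩ :=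
    eq_critCurve_of_eFunDS_eq_zero hd hα₀ hβ₀.ne' one_pos one_pos hcritS
  refine ⟨fun s t hs ht hS hT => ?_, fun s t hs ht => eFun_le_eFun_one_one ha₁.le ha₂.le
    hd.le hα₀.le hβ₀.le hαβ hp.le hS₁ hT₁ hs.le ht.le⟩
  obtain ⟨hsD, rfl⟩ := eq_critCurve_of_eFunDS_eq_zero hd hα₀ hβ₀.ne' hs ht hS
  obtain rfl : s = 1 := eq_of_eFunDT_critCurve_eq_zero ha₁.le hb₁.le hd hα₀ (by linarith)
    hp.le hβ₀ hmax hsD h1D hT (by rwa [← h1curve])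
  exact ⟨rfl, h1curve.symm⟩

/-- Lemma A.2 of the appendix. If every critical point of `e` in
`V = (0,∞)×(0,∞)` is a strict local maximum, then `(1,1)` is the only critical
point of `e` in `V` and it is a global maximum. -/
theorem statement4 (a₁ a₂ b₁ b₂ d p α β : ℝ)
    (ha₁ : 0 < a₁) (ha₂ : 0 < a₂) (hb₁ : 0 < b₁) (hb₂ : 0 < b₂) (hd : 0 < d)
    (hp : 2 < p) (hα : 1 < α) (hβ : 1 < β) (hαβ : α + β = p)
    (hcritS : eFunDS a₁ a₂ b₁ b₂ d p α β 1 1 = 0)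
    (hcritT : eFunDT a₁ a₂ b₁ b₂ d p α β 1 1 = 0)
    (hmax : ∀ s t : ℝ, 0 < s → 0 < t →
      eFunDS a₁ a₂ b₁ b₂ d p α β s t = 0 → eFunDT a₁ a₂ b₁ b₂ d p α β s t = 0 →
      ∃ ε > 0, ∀ s' t' : ℝ, 0 < s' → 0 < t' → |s' - s| < ε → |t' - t| < ε →
        (s', t') ≠ (s, t) →
        eFun a₁ a₂ b₁ b₂ d p α β s' t' < eFun a₁ a₂ b₁ b₂ d p α β s t) :
    (∀ s t : ℝ, 0 < s → 0 < t →
      eFunDS a₁ a₂ b₁ b₂ d p α β s t = 0 → eFunDT a₁ a₂ b₁ b₂ d p α β s t = 0 →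
      s = 1 ∧ t = 1) ∧
    (∀ s t : ℝ, 0 < s → 0 < t →
      eFun a₁ a₂ b₁ b₂ d p α β s t ≤ eFun a₁ a₂ b₁ b₂ d p α β 1 1) :=
  statement4_general a₁ a₂ b₁ b₂ d p α β ha₁ ha₂ hb₁ hd hp hα hβ hαβ hcritS hcritT hmax
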